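/- arXiv:1004.0016 — 3 statements merged into one kernel-verified Lean document; each statement's English description precedes it below -/
import Mathlib

section
/- Let P(x,d) = 24d^4 + 60d^3 - 120d^2 - 432d - 40d^3 x - 119d^2 x - 6dx + 432x + 43d^2 x^2 + 113d x^2 + 54 x^2 - 15d x^3 - 30 x^3. Then P(x,d) ≥ 0 for all real x with 0 ≤ x ≤ 3(d+2)/(d+5) and all integers d ≥ 3. -/
theorem poly_P_nonneg (d : ℤ) (hd : 3 ≤ d) (x : ℝ)
    (hx0 : 0 ≤ x) (hx1 : x ≤ 3 * ((d : ℝ) + 2) / ((d : ℝ) + 5)) :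
    0 ≤ 24*(d:ℝ)^4 + 60*(d:ℝ)^3 - 120*(d:ℝ)^2 - 432*(d:ℝ)
      - 40*(d:ℝ)^3*x - 119*(d:ℝ)^2*x - 6*(d:ℝ)*x + 432*x
      + 43*(d:ℝ)^2*x^2 + 113*(d:ℝ)*x^2 + 54*x^2 - 15*(d:ℝ)*x^3 - 30*x^3 := by
  have hc : (3:ℝ) ≤ (d:ℝ) := by exact_mod_cast hd
  have hp : (0:ℝ) < (d:ℝ) + 5 := by linarith
  have h1 : x * ((d:ℝ) + 5) ≤ 3 * ((d:ℝ) + 2) := by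
    rw [div_eq_mul_inv] at hx1
    calc x * ((d:ℝ)+5) ≤ 3*((d:ℝ)+2) * ((d:ℝ)+5)⁻¹ * ((d:ℝ)+5) :=
          mul_le_mul_of_nonneg_right hx1 (le_of_lt hp)
      _ = 3*((d:ℝ)+2) := by field_simp
  have hx3 : x ≤ 3 := by nlinarith
  rcases eq_or_lt_of_le hd with heq | hlt
  · -- d = 3
    have h3 : (d:ℝ) = 3 := by exact_mod_cast heq.symm
    rw [h3]
    have hx158 : x ≤ 15/8 := by nlinarith [h1]
    nlinarith [sq_nonneg (x - 7/5), mul_nonneg (mul_nonneg hx0 hx0) (by linarith : (0:ℝ) ≤ 15/8 - x), sq_nonneg x]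
  · -- d ≥ 4
    have hc4 : (4:ℝ) ≤ (d:ℝ) := by exact_mod_cast hlt
    set c : ℝ := (d:ℝ)
    have hu : (0:ℝ) ≤ c - 4 := by linarith
    have hu2 : (0:ℝ) ≤ (c-4)^2 := sq_nonneg _
    have hu3 : (0:ℝ) ≤ (c-4)^3 := pow_nonneg hu 3
    have hu4 : (0:ℝ) ≤ (c-4)^4 := pow_nonneg hu 4
    have hu5 : (0:ℝ) ≤ (c-4)^5 := pow_nonneg hu 5
    have hu6 : (0:ℝ) ≤ (c-4)^6 := pow_nonneg hu 6
    have hA : (0:ℝ) < 43*c^2 + 68*c - 36 := by nlinarith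
    -- -D ≥ 0
    have hD : (0:ℝ) ≤ -((-(40*c^3+119*c^2+6*c-432))^2
        - 4*(43*c^2+68*c-36)*(24*c^4+60*c^3-120*c^2-432*c)) := by
      have key : -((-(40*c^3+119*c^2+6*c-432))^2
          - 4*(43*c^2+68*c-36)*(24*c^4+60*c^3-120*c^2-432*c))
          = 2528*(c-4)^6 + 68000*(c-4)^5 + 730863*(c-4)^4 + 3967196*(c-4)^3
            + 11258540*(c-4)^2 + 15303264*(c-4) + 6966720 := by ring
      rw [key]; linarith
    have hcube : (0:ℝ) ≤ (15*c+30) * (x^2 * (3 - x)) := by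
      apply mul_nonneg (by linarith)
      exact mul_nonneg (sq_nonneg x) (by linarith)
    have hsq := sq_nonneg (2*(43*c^2+68*c-36)*x + (-(40*c^3+119*c^2+6*c-432)))
    have hprod := mul_nonneg (le_of_lt hA) hcube
    nlinarith [hsq, hD, hprod, hA]
end

section
/- Let Ω and Ω* be measurable subsets of ℝ^d of equal finite volume with Ω* a ball centered at the origin, and let F(x) = f(|x|) with f : [0,∞) → ℝ strictly increasing and F integrable on Ω ∪ Ω*. Then ∫_Ω F dx ≥ ∫_{Ω*} F dx, with equality if and only if Ω equals Ω* up to measure zero. -/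
/-!
Write `S` for the ball and `c = f (max R 0)` (the `max` covers `R ≤ 0`, where `S` is empty): then
`F < c` on `S` and `F ≥ c` off `S`. Since `Ω \ S` and `S \ Ω` have the same measure, subtracting `c`
on both costs nothing, and `∫_Ω F - ∫_S F = ∫_{Ω \ S} (F - c) + ∫_{S \ Ω} (c - F)` is a sum of two
nonnegative terms. The second one vanishes only if `S \ Ω` is null, and then so is `Ω \ S`.
-/

namespace MeasureTheory

variable {α : Type*} [MeasurableSpace α] {μ : Measure α} {g : α → ℝ} {s t : Set α}

lemma measure_eq_zero_of_setIntegral_eq_zero_of_pos (hs : MeasurableSet s)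
    (hpos : ∀ x ∈ s, 0 < g x) (hg : IntegrableOn g s μ) (h : ∫ x in s, g x ∂μ = 0) : μ s = 0 := by
  have hae_zero : g =ᵐ[μ.restrict s] 0 :=
    (setIntegral_eq_zero_iff_of_nonneg_ae
      (ae_restrict_of_forall_mem hs fun x hx => (hpos x hx).le) hg).mp h
  have hae_false : ∀ᵐ x ∂μ.restrict s, False := by
    filter_upwards [hae_zero, ae_restrict_of_forall_mem hs hpos] with x hx hxpos
    exact hxpos.ne' hx
  rw [← Measure.restrict_eq_zero, ← ae_eq_bot]
  exact Filter.eventually_false_iff_eq_bot.mp hae_false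

lemma setIntegral_sub_setIntegral_eq_of_measure_eq (hs : MeasurableSet s) (ht : MeasurableSet t)
    (hμ : μ s = μ t) (hfin : μ t ≠ ⊤) (hg : IntegrableOn g (s ∪ t) μ) (c : ℝ) :
    ∫ x in s, g x ∂μ - ∫ x in t, g x ∂μ =
      ∫ x in s \ t, (g x - c) ∂μ + ∫ x in t \ s, (c - g x) ∂μ := by
  have hsdiff : μ (s \ t) = μ (t \ s) :=
    measure_sdiff_symm hs.nullMeasurableSet ht.nullMeasurableSet hμ
      (measure_ne_top_of_subset Set.inter_subset_right hfin)
  have hfin_ts : μ (t \ s) ≠ ⊤ := measure_ne_top_of_subset Set.sdiff_subset hfin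
  have hgs : IntegrableOn g s μ := hg.mono_set Set.subset_union_left
  have hgt : IntegrableOn g t μ := hg.mono_set Set.subset_union_right
  have hc_st : IntegrableOn (fun _ => c) (s \ t) μ := integrableOn_const (hsdiff ▸ hfin_ts)
  have hc_ts : IntegrableOn (fun _ => c) (t \ s) μ := integrableOn_const hfin_ts
  rw [← integral_inter_add_sdiff ht hgs, ← integral_inter_add_sdiff hs hgt, Set.inter_comm t s,
    integral_sub (hgs.mono_set Set.sdiff_subset) hc_st,
    integral_sub hc_ts (hgt.mono_set Set.sdiff_subset),
    setIntegral_const, setIntegral_const, measureReal_def, measureReal_def, hsdiff]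
  ring

theorem setIntegral_le_setIntegral_of_le_on_of_ge_off {c : ℝ} (hs : MeasurableSet s)
    (ht : MeasurableSet t) (hμ : μ s = μ t) (hfin : μ t ≠ ⊤) (hg : IntegrableOn g (s ∪ t) μ)
    (hle : ∀ x ∈ t, g x ≤ c) (hge : ∀ x ∉ t, c ≤ g x) : ∫ x in t, g x ∂μ ≤ ∫ x in s, g x ∂μ := by
  have hsum := setIntegral_sub_setIntegral_eq_of_measure_eq hs ht hμ hfin hg c
  have hout : 0 ≤ ∫ x in s \ t, (g x - c) ∂μ :=
    setIntegral_nonneg (hs.diff ht) fun x hx => sub_nonneg.mpr (hge x hx.2)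
  have hin : 0 ≤ ∫ x in t \ s, (c - g x) ∂μ :=
    setIntegral_nonneg (ht.diff hs) fun x hx => sub_nonneg.mpr (hle x hx.1)
  linarith

theorem setIntegral_eq_setIntegral_iff_of_lt_on_of_ge_off {c : ℝ} (hs : MeasurableSet s)
    (ht : MeasurableSet t) (hμ : μ s = μ t) (hfin : μ t ≠ ⊤) (hg : IntegrableOn g (s ∪ t) μ)
    (hlt : ∀ x ∈ t, g x < c) (hge : ∀ x ∉ t, c ≤ g x) :
    ∫ x in s, g x ∂μ = ∫ x in t, g x ∂μ ↔ μ (symmDiff s t) = 0 := by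
  refine ⟨fun heq => ?_, fun h => setIntegral_congr_set (measure_symmDiff_eq_zero_iff.mp h)⟩
  have hsum := setIntegral_sub_setIntegral_eq_of_measure_eq hs ht hμ hfin hg c
  have hout : 0 ≤ ∫ x in s \ t, (g x - c) ∂μ :=
    setIntegral_nonneg (hs.diff ht) fun x hx => sub_nonneg.mpr (hge x hx.2)
  have hin : 0 ≤ ∫ x in t \ s, (c - g x) ∂μ :=
    setIntegral_nonneg (ht.diff hs) fun x hx => sub_nonneg.mpr (hlt x hx.1).le
  have hts : μ (t \ s) = 0 :=
    measure_eq_zero_of_setIntegral_eq_zero_of_pos (ht.diff hs)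
      (fun x hx => sub_pos.mpr (hlt x hx.1))
      ((integrableOn_const (measure_ne_top_of_subset Set.sdiff_subset hfin)).sub
        (hg.mono_set (Set.sdiff_subset.trans Set.subset_union_right)))
      (by linarith)
  have hst : μ (s \ t) = 0 := by
    rw [measure_sdiff_symm hs.nullMeasurableSet ht.nullMeasurableSet hμ
      (measure_ne_top_of_subset Set.inter_subset_right hfin), hts]
  exact measure_symmDiff_eq_zero_iff.mpr (ae_eq_set.mpr ⟨hst, hts⟩)

end MeasureTheory

open MeasureTheory

theorem increasing_radial_rearrangement_general (d : ℕ) (Ω Ωstar : Set (EuclideanSpace ℝ (Fin d)))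
    (R : ℝ) (hΩ : MeasurableSet Ω) (hΩstar : Ωstar = Metric.ball 0 R)
    (hvol : volume Ω = volume Ωstar)
    (f : ℝ → ℝ) (hf : StrictMonoOn f (Set.Ici 0))
    (F : EuclideanSpace ℝ (Fin d) → ℝ) (hFdef : ∀ x, F x = f ‖x‖)
    (hF : IntegrableOn F (Ω ∪ Ωstar)) :
    (∫ x in Ωstar, F x) ≤ (∫ x in Ω, F x) ∧
      ((∫ x in Ω, F x) = (∫ x in Ωstar, F x) ↔ volume (symmDiff Ω Ωstar) = 0) := by
  subst hΩstar
  have hR₀ : max R 0 ∈ Set.Ici 0 := le_max_right R 0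
  have hlt : ∀ x ∈ Metric.ball 0 R, F x < f (max R 0) := fun x hx => by
    rw [mem_ball_zero_iff] at hx
    rw [hFdef]
    exact hf (norm_nonneg x) hR₀ (hx.trans_le (le_max_left R 0))
  have hge : ∀ x ∉ Metric.ball 0 R, f (max R 0) ≤ F x := fun x hx => by
    rw [mem_ball_zero_iff, not_lt] at hx
    rw [hFdef]
    exact hf.monotoneOn hR₀ (norm_nonneg x) (max_le hx (norm_nonneg x))
  have hfin : volume (Metric.ball (0 : EuclideanSpace ℝ (Fin d)) R) ≠ ⊤ := measure_ball_lt_top.ne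
  exact ⟨setIntegral_le_setIntegral_of_le_on_of_ge_off hΩ measurableSet_ball hvol hfin hF
      (fun x hx => (hlt x hx).le) hge,
    setIntegral_eq_setIntegral_iff_of_lt_on_of_ge_off hΩ measurableSet_ball hvol hfin hF hlt hge⟩

theorem increasing_radial_rearrangement (d : ℕ) (Ω Ωstar : Set (EuclideanSpace ℝ (Fin d)))
    (R : ℝ) (hΩ : MeasurableSet Ω) (hΩstar : Ωstar = Metric.ball 0 R)
    (hvol : volume Ω = volume Ωstar) (hfin : volume Ω < ⊤)
    (f : ℝ → ℝ) (hf : StrictMonoOn f (Set.Ici 0))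
    (F : EuclideanSpace ℝ (Fin d) → ℝ) (hFdef : ∀ x, F x = f ‖x‖)
    (hF : IntegrableOn F (Ω ∪ Ωstar)) :
    (∫ x in Ωstar, F x) ≤ (∫ x in Ω, F x) ∧
      ((∫ x in Ω, F x) = (∫ x in Ωstar, F x) ↔ volume (symmDiff Ω Ωstar) = 0) :=
  increasing_radial_rearrangement_general d Ω Ωstar R hΩ hΩstar hvol f hf F hFdef hF
end

section
/- The equation sin(2a) − 2a/3 = 0 has exactly one solution in a > 0, and this solution lies in the interval (1.13, 1.14). -/
/-!
Write `x = 2a`. Concavity of `sin` on `[0, π]` makes `sin x / x` decreasing there, so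
`sin x > x / 3` on `(0, 2.26]` as soon as it holds at `2.26`; for `x ≥ π` we have
`sin x ≤ 1 < x / 3`; and on `[π / 2, π]` the function `sin x - x / 3` is strictly decreasing.
Taylor bounds for `sin (π - x)` show that it changes sign between `2.26` and `2.28`, so the
positive root is unique and lies there.
-/

open Real Set

lemma antitoneOn_sin_div : AntitoneOn (fun x => sin x / x) (Ioc 0 π) := by
  have h := strictConcaveOn_sin_Icc.concaveOn.antitoneOn_slope_gt (left_mem_Icc.2 pi_pos.le)
  intro x hx y hy hxy
  simpa [slope_def_field] using
    h ⟨Ioc_subset_Icc_self hx, hx.1⟩ ⟨Ioc_subset_Icc_self hy, hy.1⟩ hxy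

lemma div_three_lt_sin_two_point_two_six : 2.26 / 3 < sin 2.26 := by
  have hy₀ : 0.88 < π - 2.26 := by linarith [pi_gt_d2]
  have hy₁ : π - 2.26 < 0.89 := by linarith [pi_lt_d2]
  have h := sin_gt_sub_cube (x := π - 2.26) (by linarith)
  rw [sin_pi_sub] at h
  generalize π - 2.26 = y at *
  nlinarith [mul_pos (sub_pos.2 hy₀) (sub_pos.2 hy₁)]

lemma sin_two_point_two_eight_lt_div_three : sin 2.28 < 2.28 / 3 := by
  have hy₀ : 0.86 < π - 2.28 := by linarith [pi_gt_d2]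
  -- the margin is about `3 * 10⁻⁴`, hence the four-digit bound on `π`
  have hy₁ : π - 2.28 < 0.8616 := by linarith [pi_lt_d4]
  have h := (abs_le.1 (sin_bound (x := π - 2.28) (by rw [abs_le]; constructor <;> linarith))).2
  rw [sin_pi_sub, abs_of_pos (by linarith)] at h
  generalize π - 2.28 = y at *
  nlinarith [mul_pos (sub_pos.2 hy₀) (sub_pos.2 hy₁), pow_le_pow_left₀ (by linarith) hy₁.le 5]

lemma div_three_lt_sin_of_le {x : ℝ} (hx₀ : 0 < x) (hx : x ≤ 2.26) : x / 3 < sin x := by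
  have hπ := pi_gt_d2
  have h := antitoneOn_sin_div ⟨hx₀, by linarith⟩ ⟨by norm_num, by linarith⟩ hx
  have h' : 1 / 3 < sin 2.26 / 2.26 := by
    rw [lt_div_iff₀ (by norm_num)]
    linarith [div_three_lt_sin_two_point_two_six]
  calc x / 3 = 1 / 3 * x := by ring
    _ < sin 2.26 / 2.26 * x := by gcongr
    _ ≤ sin x := (le_div_iff₀ hx₀).1 h

lemma sin_lt_div_three_of_pi_le {x : ℝ} (hx : π ≤ x) : sin x < x / 3 := by
  linarith [sin_le_one x, pi_gt_three]

lemma strictAntiOn_sin_sub_div_three :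
    StrictAntiOn (fun x => sin x - x / 3) (Icc (π / 2) π) := by
  intro x hx y hy hxy
  have h := strictAntiOn_cos (a := x - π / 2) (b := y - π / 2)
    ⟨by linarith [hx.1], by linarith [hx.2, pi_pos]⟩
    ⟨by linarith [hy.1], by linarith [hy.2, pi_pos]⟩ (by linarith)
  rw [cos_sub_pi_div_two, cos_sub_pi_div_two] at h
  show sin y - y / 3 < sin x - x / 3
  linarith

lemma exists_mem_Ioo_setOf_sin_sub_div_three_eq_zero_eq_singleton :
    ∃ x₀ ∈ Ioo (2.26 : ℝ) 2.28, {x | 0 < x ∧ sin x - x / 3 = 0} = {x₀} := by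
  have hπ := pi_gt_d2
  have hsub : Icc (2.26 : ℝ) 2.28 ⊆ Icc (π / 2) π :=
    Icc_subset_Icc (by linarith [pi_lt_four]) (by linarith)
  obtain ⟨x₀, hx₀, hx₀_root : sin x₀ - x₀ / 3 = 0⟩ :=
    intermediate_value_Ioo' (by norm_num : (2.26 : ℝ) ≤ 2.28)
      (by fun_prop : Continuous fun x => sin x - x / 3).continuousOn
      (show (0 : ℝ) ∈ Ioo (sin 2.28 - 2.28 / 3) (sin 2.26 - 2.26 / 3) from
        ⟨by linarith [sin_two_point_two_eight_lt_div_three],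
          by linarith [div_three_lt_sin_two_point_two_six]⟩)
  refine ⟨x₀, hx₀, Subset.antisymm (fun x ⟨hx, hx_root⟩ => ?_) ?_⟩
  · have hx₁ : 2.26 < x := by
      by_contra! h
      linarith [div_three_lt_sin_of_le hx h]
    have hx₂ : x < π := by
      by_contra! h
      linarith [sin_lt_div_three_of_pi_le h]
    exact strictAntiOn_sin_sub_div_three.injOn ⟨by linarith [pi_lt_four], hx₂.le⟩
      (hsub (Ioo_subset_Icc_self hx₀)) (hx_root.trans hx₀_root.symm)
  · rintro x rfl
    exact ⟨by linarith [hx₀.1], hx₀_root⟩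

theorem degenerate_root :
    (∃! a : ℝ, 0 < a ∧ sin (2*a) - 2*a/3 = 0) ∧
      ∀ a : ℝ, 0 < a → sin (2*a) - 2*a/3 = 0 → a ∈ Set.Ioo (1.13 : ℝ) 1.14 := by
  obtain ⟨x₀, hx₀, hroots⟩ := exists_mem_Ioo_setOf_sin_sub_div_three_eq_zero_eq_singleton
  have hroot (a : ℝ) : (0 < a ∧ sin (2*a) - 2*a/3 = 0) ↔ a = x₀ / 2 := by
    have h : (0 < 2 * a ∧ sin (2 * a) - 2 * a / 3 = 0) ↔ 2 * a = x₀ :=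
      Set.ext_iff.1 hroots (2 * a)
    rw [← mul_pos_iff_of_pos_left two_pos, h]
    constructor <;> intro h <;> linarith
  refine ⟨⟨x₀ / 2, (hroot _).2 rfl, fun a ha => (hroot a).1 ha⟩, fun a ha ha_root => ?_⟩
  rw [(hroot a).1 ⟨ha, ha_root⟩]
  constructor <;> linarith [hx₀.1, hx₀.2]
end
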